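/- arXiv:1803.07353 — 4 statements merged into one kernel-verified Lean document; each statement's English description precedes it below -/
import Mathlib

section
/- Let M be a complete connected Riemannian manifold, K ⊆ M closed, r > 0, and f(x) = min(d(x,K), r). If f is differentiable at x with grad f(x) ≠ 0, then 0 < d(x,K) < r, the gradient grad f(x) has norm one, and there exists a unique minimizing unit-speed geodesic from x to K; moreover grad f(x) = −γ'(0) for that geodesic γ. -/
open Metric InnerProductSpace
open scoped RealInnerProductSpace NNReal

/-- For the truncated distance function `f(x) = min(d(x,K), r)` on a
complete Riemannian manifold (formalized in the Euclidean/Hilbert space model, where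
minimizing unit-speed geodesics from `x` to `K` are `t ↦ x + t • v` with `‖v‖ = 1`):
if `f` is differentiable at `x` with `grad f(x) ≠ 0`, then `0 < d(x,K) < r`, the
gradient has norm one, and there is a unique minimizing unit-speed geodesic from `x`
to `K`, with `grad f(x) = -γ'(0)`. -/
theorem stmt_2 {E : Type*} [NormedAddCommGroup E] [InnerProductSpace ℝ E]
    [CompleteSpace E] (K : Set E) (hK : IsClosed K) (hKne : K.Nonempty)
    (r : ℝ) (hr : 0 < r)
    (f : E → ℝ) (hf : f = fun x => min (infDist x K) r)
    (x : E) (hdiff : DifferentiableAt ℝ f x) (hgrad : gradient f x ≠ 0) :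
    0 < infDist x K ∧ infDist x K < r ∧ ‖gradient f x‖ = 1 ∧
      ∃! v : E, ‖v‖ = 1 ∧ x + infDist x K • v ∈ K ∧ gradient f x = -v := by
  set d := infDist x K with hd
  set g := gradient f x with hgdef
  have hgeq : g = (toDual ℝ E).symm (fderiv ℝ f x) := rfl
  set φ := fderiv ℝ f x with hφdef
  have hφ : ∀ h : E, ⟪g, h⟫_ℝ = φ h := fun h => by
    rw [hgeq]; exact InnerProductSpace.toDual_symm_apply
  have hd0 : 0 ≤ d := infDist_nonneg
  -- Part 1: 0 < d
  have hdpos : 0 < d := by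
    rcases hd0.lt_or_eq with h | h
    · exact h
    · exfalso; apply hgrad
      have hmin : IsLocalMin f x := by
        apply Filter.Eventually.of_forall
        intro y
        have hx0 : f x = 0 := by rw [hf]; simp only [← hd, ← h]; exact min_eq_left hr.le
        rw [hx0, hf]
        exact le_min infDist_nonneg hr.le
      rw [hgdef, gradient, hmin.fderiv_eq_zero, map_zero]
  -- Part 2: d < r
  have hdr : d < r := by
    rcases lt_or_ge d r with h | h
    · exact h
    · exfalso; apply hgrad
      have hmax : IsLocalMax f x := by
        apply Filter.Eventually.of_forall
        intro y
        have hxr : f x = r := by rw [hf]; exact min_eq_right h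
        rw [hxr, hf]
        exact min_le_right _ _
      rw [hgdef, gradient, hmax.fderiv_eq_zero, map_zero]
  have hfx : f x = d := by rw [hf]; exact min_eq_left hdr.le
  -- Lipschitz bound : ‖g‖ ≤ 1
  have hlip : LipschitzWith 1 f := by
    rw [hf]; exact (lipschitz_infDist_pt K).min_const r
  have hgle : ‖g‖ ≤ 1 := by
    have h1 : ‖φ‖ ≤ ((1 : ℝ≥0) : ℝ) := hdiff.hasFDerivAt.le_of_lipschitz hlip
    have h2 : ‖g‖ = ‖φ‖ := by rw [hgeq]; exact LinearIsometryEquiv.norm_map _ _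
    simpa [h2] using h1
  -- little-o estimate
  have hlo : (fun x' => f x' - f x - φ (x' - x)) =o[nhds x] fun x' => x' - x :=
    hdiff.hasFDerivAt.isLittleO
  clear_value d g φ
  clear hgeq hφdef hgdef
  -- key approximation lemma
  have key : ∀ ε : ℝ, 0 < ε → ∃ (v : E) (D : ℝ), ‖v‖ = 1 ∧ ⟪g, v⟫_ℝ ≤ 2 * ε - 1 ∧
      d ≤ D ∧ D ≤ d + ε * d ∧ x + D • v ∈ K := by
    intro ε hε
    obtain ⟨δ, hδpos, hδ⟩ := Metric.eventually_nhds_iff.mp (hlo.bound hε)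
    set t := min δ d / 2 with ht_def
    have htpos : 0 < t := by positivity
    have htδ : t < δ := by
      have h1 : min δ d ≤ δ := min_le_left _ _
      simp only [ht_def]; linarith
    have htd : t ≤ d / 2 := by
      have h1 : min δ d ≤ d := min_le_right _ _
      simp only [ht_def]; linarith
    clear_value t
    clear ht_def
    have hlt : infDist x K < d + ε * t := by
      rw [← hd]; have := mul_pos hε htpos; linarith
    obtain ⟨y, hyK, hy⟩ := (infDist_lt_iff hKne).mp hlt
    set D := ‖y - x‖ with hD_def
    have hdist : dist x y = D := by rw [dist_eq_norm, norm_sub_rev]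
    have hdD : d ≤ D := by rw [hd, ← hdist]; exact infDist_le_dist_of_mem hyK
    have hDub : D < d + ε * t := by rw [← hdist]; exact hy
    have hDpos : 0 < D := lt_of_lt_of_le hdpos hdD
    clear_value D
    set v := D⁻¹ • (y - x) with hv_def
    have hvnorm : ‖v‖ = 1 := by
      rw [hv_def, norm_smul, norm_inv, Real.norm_eq_abs, abs_of_pos hDpos, ← hD_def,
        inv_mul_cancel₀ hDpos.ne']
    have hDv : D • v = y - x := by
      rw [hv_def, smul_smul, mul_inv_cancel₀ hDpos.ne', one_smul]
    have hxDv : x + D • v ∈ K := by rw [hDv]; simpa using hyK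
    clear_value v
    -- use differentiability at x' = x + t • v
    have hx' : dist (x + t • v) x < δ := by
      rw [dist_eq_norm, add_sub_cancel_left, norm_smul, Real.norm_eq_abs,
        abs_of_pos htpos, hvnorm, mul_one]
      exact htδ
    have hineq := hδ hx'
    have hnorm_tv : ‖(x + t • v) - x‖ = t := by
      rw [add_sub_cancel_left, norm_smul, Real.norm_eq_abs, abs_of_pos htpos, hvnorm, mul_one]
    rw [add_sub_cancel_left] at hineq
    have hφtv : φ (t • v) = t * ⟪g, v⟫_ℝ := by rw [← hφ, real_inner_smul_right]
    -- upper bound on f (x + t • v)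
    have hfub : f (x + t • v) ≤ D - t := by
      have h1 : f (x + t • v) ≤ infDist (x + t • v) K := by rw [hf]; exact min_le_left _ _
      have h2 : infDist (x + t • v) K ≤ dist (x + t • v) y := infDist_le_dist_of_mem hyK
      have h3 : dist (x + t • v) y = D - t := by
        rw [dist_eq_norm]
        have h4 : x + t • v - y = (t - D) • v := by
          rw [sub_smul, hDv]; abel
        rw [h4, norm_smul, Real.norm_eq_abs, hvnorm, mul_one, abs_of_nonpos (by linarith),
          neg_sub]
      linarith [h1, h2.trans_eq h3]
    -- combine
    have habs : |f (x + t • v) - f x - φ (t • v)| ≤ ε * t := by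
      rw [Real.norm_eq_abs] at hineq
      calc |f (x + t • v) - f x - φ (t • v)| ≤ ε * ‖t • v‖ := hineq
        _ = ε * t := by
            rw [norm_smul, Real.norm_eq_abs, abs_of_pos htpos, hvnorm, mul_one]
    have hlb : f x + φ (t • v) - ε * t ≤ f (x + t • v) := by
      have h5 := abs_le.mp habs
      linarith [h5.1]
    rw [hfx, hφtv] at hlb
    have hgv : ⟪g, v⟫_ℝ ≤ 2 * ε - 1 := by
      have h1 : d + t * ⟪g, v⟫_ℝ - ε * t ≤ D - t := le_trans hlb hfub
      have h2 : t * ⟪g, v⟫_ℝ ≤ t * (2 * ε - 1) := by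
        have e1 : t * (2 * ε - 1) = ε * t + ε * t - t := by ring
        rw [e1]; linarith
      exact le_of_mul_le_mul_left h2 htpos
    have hDd2 : D ≤ d + ε * d := by
      have h1 : ε * t ≤ ε * d := mul_le_mul_of_nonneg_left (by linarith) hε.le
      linarith
    exact ⟨v, D, hvnorm, hgv, hdD, hDd2, hxDv⟩
  -- ‖g‖ = 1
  have hgnorm : ‖g‖ = 1 := by
    refine le_antisymm hgle ?_
    by_contra h
    push_neg at h
    have hε : 0 < (1 - ‖g‖) / 4 := by linarith
    obtain ⟨v, D, hvnorm, hgv, -, -, -⟩ := key _ hε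
    have h1 : -(‖g‖ * ‖v‖) ≤ ⟪g, v⟫_ℝ :=
      (abs_le.mp (abs_real_inner_le_norm g v)).1
    rw [hvnorm, mul_one] at h1
    linarith
  -- membership: x - d • g ∈ K
  have hmem : x - d • g ∈ K := by
    rw [← hK.closure_eq, Metric.mem_closure_iff]
    intro ε' hε'
    set ε := min 1 ((ε' / (3 * d + 1)) ^ 2) with hε_def
    have hεpos : 0 < ε := by
      apply lt_min one_pos
      positivity
    have hε1 : ε ≤ 1 := min_le_left _ _
    have hεsq : ε ≤ (ε' / (3 * d + 1)) ^ 2 := min_le_right _ _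
    clear_value ε
    clear hε_def
    obtain ⟨v, D, hvnorm, hgv, hdD, hDub, hyK⟩ := key ε hεpos
    refine ⟨x + D • v, hyK, ?_⟩
    have hsqrt_nonneg : 0 ≤ Real.sqrt ε := Real.sqrt_nonneg ε
    have hsq : Real.sqrt ε ^ 2 = ε := Real.sq_sqrt hεpos.le
    -- ‖g + v‖ ≤ 2 √ε
    have hgv2 : ‖g + v‖ ^ 2 ≤ 4 * ε := by
      rw [norm_add_sq_real, hgnorm, hvnorm]
      nlinarith
    have hgvnorm : ‖g + v‖ ≤ 2 * Real.sqrt ε := by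
      nlinarith [norm_nonneg (g + v)]
    -- ε ≤ √ε
    have hεsqrt : ε ≤ Real.sqrt ε := by
      nlinarith
    -- distance bound
    have hdecomp : (x - d • g) - (x + D • v) = -(d • (g + v) + (D - d) • v) := by
      rw [smul_add, sub_smul]
      abel
    have hdist : dist (x - d • g) (x + D • v) ≤ d * ‖g + v‖ + (D - d) := by
      rw [dist_eq_norm, hdecomp, norm_neg]
      calc ‖d • (g + v) + (D - d) • v‖ ≤ ‖d • (g + v)‖ + ‖(D - d) • v‖ := norm_add_le _ _
        _ = d * ‖g + v‖ + (D - d) := by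
            rw [norm_smul, norm_smul, Real.norm_eq_abs, Real.norm_eq_abs,
              abs_of_pos hdpos, hvnorm, mul_one, abs_of_nonneg (by linarith)]
    have hb1 : d * ‖g + v‖ + (D - d) ≤ 3 * d * Real.sqrt ε := by
      have h1 : d * ‖g + v‖ ≤ d * (2 * Real.sqrt ε) :=
        mul_le_mul_of_nonneg_left hgvnorm hdpos.le
      have h2 : ε * d ≤ Real.sqrt ε * d := mul_le_mul_of_nonneg_right hεsqrt hdpos.le
      nlinarith
    have hsε : Real.sqrt ε ≤ ε' / (3 * d + 1) := by
      have h1 := Real.sqrt_le_sqrt hεsq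
      rwa [Real.sqrt_sq (by positivity)] at h1
    have hfin : 3 * d * Real.sqrt ε < ε' := by
      have h3d : (0:ℝ) < 3 * d + 1 := by linarith
      have h1 : 3 * d * Real.sqrt ε ≤ 3 * d * (ε' / (3 * d + 1)) :=
        mul_le_mul_of_nonneg_left hsε (by linarith)
      have h4 : 3 * d * (ε' / (3 * d + 1)) < ε' := by
        rw [show 3 * d * (ε' / (3 * d + 1)) = 3 * d * ε' / (3 * d + 1) by ring,
          div_lt_iff₀ h3d]
        nlinarith
      linarith
    calc dist (x - d • g) (x + D • v) ≤ d * ‖g + v‖ + (D - d) := hdist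
      _ ≤ 3 * d * Real.sqrt ε := hb1
      _ < ε' := hfin
  refine ⟨hdpos, hdr, hgnorm, -g, ⟨by rw [norm_neg, hgnorm], ?_, by rw [neg_neg]⟩, ?_⟩
  · rw [smul_neg, ← sub_eq_add_neg]
    exact hmem
  · rintro w ⟨-, -, hw⟩
    rw [hw, neg_neg]
end

section
/- Let M be a complete connected Riemannian manifold, K ⊆ M closed, r > 0, and f(x) = min(d(x,K), r). If x lies on the boundary of the open r-neighborhood K^r = {p : d(p,K) < r} of K, then f is not differentiable at x, or if it is differentiable then grad f(x) = 0 leads to a contradiction; i.e., no point of ∂K^r is a point of differentiability of f. -/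
open Metric

/-- For the truncated distance function `f(x) = min(d(x,K), r)`
(formalized in the Euclidean/Hilbert space model of a complete Riemannian manifold),
no point of the topological boundary of the open `r`-neighborhood
`K^r = {p : d(p,K) < r}` is a point of differentiability of `f`. -/
theorem stmt_3 {E : Type*} [NormedAddCommGroup E] [InnerProductSpace ℝ E]
    [CompleteSpace E] (K : Set E) (hK : IsClosed K) (hKne : K.Nonempty)
    (r : ℝ) (hr : 0 < r)
    (f : E → ℝ) (hf : f = fun x => min (infDist x K) r)
    (x : E) (hx : x ∈ frontier {p : E | infDist p K < r}) :
    ¬ DifferentiableAt ℝ f x := by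
  intro hdiff
  have hcont : Continuous fun p : E => infDist p K := continuous_infDist_pt K
  have hSopen : IsOpen {p : E | infDist p K < r} := isOpen_lt hcont continuous_const
  obtain ⟨hxc, hxi⟩ := hx
  have h1 : infDist x K ≤ r := by
    have hsub : closure {p : E | infDist p K < r} ⊆ {p : E | infDist p K ≤ r} :=
      closure_minimal (fun p hp => (le_of_lt hp : infDist p K ≤ r)) (isClosed_le hcont continuous_const)
    exact hsub hxc
  have h2 : ¬ infDist x K < r := by rw [hSopen.interior_eq] at hxi; exact hxi
  have hxr : infDist x K = r := le_antisymm h1 (not_lt.mp h2)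
  have hfx : f x = r := by rw [hf]; simp [hxr]
  have hfle : ∀ z, f z ≤ r := by intro z; rw [hf]; exact min_le_right _ _
  have hfmax : IsLocalMax f x := Filter.Eventually.of_forall (fun z => by
    rw [hfx]; exact hfle z)
  have hd0 : fderiv ℝ f x = 0 := hfmax.fderiv_eq_zero
  have hFD : HasFDerivAt f (0 : E →L[ℝ] ℝ) x := hd0 ▸ hdiff.hasFDerivAt
  rw [hasFDerivAt_iff_isLittleO_nhds_zero] at hFD
  have hev := Asymptotics.isLittleO_iff.mp hFD (by norm_num : (0:ℝ) < 1/2)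
  obtain ⟨δ, hδ, hball⟩ := Metric.eventually_nhds_iff.mp hev
  set t := min δ r / 2 with htdef
  have ht0 : 0 < t := half_pos (lt_min hδ hr)
  have htr : t < r := by
    have : min δ r ≤ r := min_le_right _ _
    rw [htdef]; linarith
  have htδ : t < δ := by
    have : min δ r ≤ δ := min_le_left _ _
    rw [htdef]; linarith
  obtain ⟨y, hyK, hyd⟩ := (infDist_lt_iff hKne).mp
    (show infDist x K < r + t/2 by rw [hxr]; linarith)
  have hrd : r ≤ dist x y := hxr ▸ infDist_le_dist_of_mem hyK
  set d := dist x y with hddef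
  have hd0' : 0 < d := lt_of_lt_of_le hr hrd
  set h : E := (t / d) • (y - x) with hhdef
  have hnh : ‖h‖ = t := by
    rw [hhdef, norm_smul, norm_sub_rev, ← dist_eq_norm, ← hddef,
      Real.norm_eq_abs, abs_of_pos (div_pos ht0 hd0')]
    field_simp
  have hdist : dist (x + h) y = d - t := by
    have heq : x + h - y = (1 - t / d) • (x - y) := by rw [hhdef]; module
    have htd : t / d ≤ 1 := (div_le_one hd0').mpr (le_of_lt (lt_of_lt_of_le htr hrd))
    rw [dist_eq_norm, heq, norm_smul, Real.norm_eq_abs, abs_of_nonneg (by linarith),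
      ← dist_eq_norm, ← hddef, sub_mul, one_mul, div_mul_cancel₀ _ (ne_of_gt hd0')]
  have hfz : f (x + h) ≤ d - t := by
    rw [hf]
    exact le_trans (min_le_left _ _) (hdist ▸ infDist_le_dist_of_mem hyK)
  have hfz' : f (x + h) < r - t/2 := lt_of_le_of_lt hfz (by linarith)
  have hclose : ‖f (x + h) - f x - (0 : E →L[ℝ] ℝ) h‖ ≤ 1/2 * ‖h‖ := by
    apply hball; rw [dist_zero_right, hnh]; exact htδ
  simp only [ContinuousLinearMap.zero_apply, sub_zero, Real.norm_eq_abs, hnh, hfx] at hclose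
  rw [abs_le] at hclose
  linarith [hclose.1]
end

section
/- Let a countable group Γ act on the right on a countable set X. Suppose that for every finite subset G ⊆ Γ and every ε > 0 there is a nonempty finite subset F ⊆ X with #(F \ F·g) < ε·#(F) for all g ∈ G. Suppose moreover F₁, F₂ ⊆ X are finite with F₂ ⊆ F₁ ∪ (F₁·g) for some g. Then the existence of such Følner sets for all (G, ε) implies the existence of a finitely additive Γ-invariant mean on X (amenability of the action). -/
/-!
A right action of `Γ` is a left action of `Γᵐᵒᵖ`. For the counting measure a finite set `F`
satisfies `#((g • F) ∆ F) = 2 #(F \ g • F)`, so Følner sets chosen for the pairs `(G, 1/(n+1))`,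
indexed by `Finset Γ × ℕ` and directed by `atTop`, form a Følner family in the sense of
`MeasureTheory.IsFoelner`. The ultrafilter limit of the densities `#(A ∩ F) / #F` is then an
invariant finitely additive probability mean (`IsFoelner.amenable`); it takes values in `[0, 1]`,
so it can be read in `ℝ`.
-/

open Set Filter Topology MeasureTheory
open scoped Pointwise symmDiff ENNReal Finset

abbrev MulOpposite.mulActionOfRightAction {Γ X : Type*} [Monoid Γ] (act : X → Γ → X)
    (act_one : ∀ x, act x 1 = x) (act_mul : ∀ x g h, act (act x g) h = act x (g * h)) :
    MulAction Γᵐᵒᵖ X where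
  smul g x := act x g.unop
  one_smul := act_one
  mul_smul g h x := (act_mul x h.unop g.unop).symm

section Foelner

variable {G X : Type*} [Group G] [MulAction G X]

theorem Finset.card_smul_finset_symmDiff [DecidableEq X] (g : G) (s : Finset X) :
    #((g • s) ∆ s) = 2 * #(s \ g • s) := by
  rw [symmDiff_def, Finset.sup_eq_union, Finset.card_union_of_disjoint disjoint_sdiff_sdiff,
    Finset.card_sdiff_comm (Finset.card_smul_finset g s)]
  ring

instance MeasureTheory.Measure.count.instSMulInvariantMeasure [MeasurableSpace X]
    [DiscreteMeasurableSpace X] : SMulInvariantMeasure G X (Measure.count : Measure X) :=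
  ⟨fun g s _ => by
    rw [Measure.count_apply (.of_discrete), Measure.count_apply (.of_discrete),
      encard_preimage_of_bijective (MulAction.bijective g)]⟩

theorem MeasureTheory.isFoelner_count_of_tendsto [MeasurableSpace X] [DiscreteMeasurableSpace X]
    [DecidableEq X] {ι : Type*} {l : Filter ι} {F : ι → Finset X} (hne : ∀ i, (F i).Nonempty)
    (hF : ∀ g : G, Tendsto (fun i => (#(F i \ g • F i) : ℝ) / #(F i)) l (𝓝 0)) :
    IsFoelner G Measure.count l (fun i => (F i : Set X)) where
  eventually_measurableSet := .of_forall fun _ => .of_discrete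
  eventually_meas_ne_zero := .of_forall fun i => Measure.count_ne_zero (hne i).to_set
  eventually_meas_ne_top := .of_forall fun i => (Measure.count_apply_lt_top.2 (F i).finite_toSet).ne
  tendsto_meas_smul_symmDiff g := by
    have hratio : ∀ i, Measure.count ((g • (F i : Set X)) ∆ F i) / Measure.count (F i : Set X)
        = ENNReal.ofReal (2 * (#(F i \ g • F i) / #(F i))) := by
      intro i
      have hpos : (0 : ℝ) < #(F i) := by exact_mod_cast (hne i).card_pos
      rw [← Finset.coe_smul_finset, ← Finset.coe_symmDiff, Measure.count_apply_finset,
        Measure.count_apply_finset, Finset.card_smul_finset_symmDiff, ← mul_div_assoc,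
        ENNReal.ofReal_div_of_pos hpos]
      norm_cast
    simp_rw [hratio]
    simpa using ENNReal.tendsto_ofReal ((hF g).const_mul 2)

theorem exists_foelner_finsets_atTop [DecidableEq X]
    (folner : ∀ (S : Finset G) (ε : ℝ), 0 < ε →
      ∃ F : Finset X, F.Nonempty ∧ ∀ g ∈ S, (#(F \ g • F) : ℝ) < ε * #F) :
    ∃ F : Finset G × ℕ → Finset X, (∀ i, (F i).Nonempty) ∧
      ∀ g : G, Tendsto (fun i => (#(F i \ g • F i) : ℝ) / #(F i)) atTop (𝓝 0) := by
  choose F hne hF using fun i : Finset G × ℕ => folner i.1 (1 / (i.2 + 1)) (by positivity)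
  refine ⟨F, hne, fun g => ?_⟩
  have hε : Tendsto (fun i : Finset G × ℕ => 1 / ((i.2 : ℝ) + 1)) atTop (𝓝 0) := by
    rw [← prod_atTop_atTop_eq]
    exact tendsto_one_div_add_atTop_nhds_zero_nat.comp tendsto_snd
  refine squeeze_zero' (.of_forall fun i => by positivity) ?_ hε
  filter_upwards [eventually_ge_atTop ({g}, 0)] with i hi
  have hcard : (0 : ℝ) < #(F i) := by exact_mod_cast (hne i).card_pos
  exact (div_le_iff₀ hcard).2 (hF i g (hi.1 (Finset.mem_singleton_self g))).le

end Foelner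

theorem ne_top_of_additive_of_univ_eq_one {X : Type*} {m : Set X → ℝ≥0∞} (huniv : m univ = 1)
    (hadd : ∀ s t, Disjoint s t → m (s ∪ t) = m s + m t) (s : Set X) : m s ≠ ∞ := by
  have hsum := hadd s sᶜ disjoint_compl_right
  rw [union_compl_self, huniv] at hsum
  exact ne_top_of_le_ne_top ENNReal.one_ne_top (hsum ▸ le_self_add)

open MulOpposite in
theorem stmt_4_general {Γ X : Type*} [Group Γ] [DecidableEq X]
    (act : X → Γ → X)
    (act_one : ∀ x, act x 1 = x)
    (act_mul : ∀ x g h, act (act x g) h = act x (g * h))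
    (folner : ∀ (G : Finset Γ) (ε : ℝ), 0 < ε →
      ∃ F : Finset X, F.Nonempty ∧ ∀ g ∈ G,
        ((F \ F.image (fun x => act x g)).card : ℝ) < ε * F.card) :
    ∃ μ : Set X → ℝ,
      (∀ A, 0 ≤ μ A) ∧
      μ Set.univ = 1 ∧
      (∀ A B : Set X, Disjoint A B → μ (A ∪ B) = μ A + μ B) ∧
      (∀ (A : Set X) (g : Γ), μ ((fun x => act x g) '' A) = μ A) := by
  classical
  let _ := mulActionOfRightAction act act_one act_mul
  let _ : MeasurableSpace X := ⊤
  obtain ⟨F, hne, hF⟩ := exists_foelner_finsets_atTop (G := Γᵐᵒᵖ) fun S ε hε =>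
    (folner (S.map opEquiv.symm.toEmbedding) ε hε).imp fun _ ⟨hne, hF⟩ =>
      ⟨hne, fun g hg => hF g.unop (Finset.mem_map_of_mem _ hg)⟩
  obtain ⟨m, huniv, hadd, hinv⟩ := (isFoelner_count_of_tendsto hne hF).amenable
  have hadd' : ∀ s t, Disjoint s t → m (s ∪ t) = m s + m t := fun s t => hadd s t .of_discrete
  have hfin := ne_top_of_additive_of_univ_eq_one huniv hadd'
  exact ⟨fun A => (m A).toReal, fun _ => ENNReal.toReal_nonneg, by simp [huniv],
    fun A B hAB => (congrArg ENNReal.toReal (hadd' A B hAB)).trans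
      (ENNReal.toReal_add (hfin A) (hfin B)),
    fun A g => congrArg ENNReal.toReal (hinv (op g) A)⟩

/-- Følner criterion, sufficiency: Let a countable group `Γ` act on the
right on a countable set `X` (formalized via `act : X → Γ → X` with the right-action
laws). If for every finite `G ⊆ Γ` and every `ε > 0` there is a nonempty finite
`F ⊆ X` with `#(F \ F·g) < ε·#F` for all `g ∈ G`, and moreover there are finite
`F₁, F₂ ⊆ X` with `F₂ ⊆ F₁ ∪ F₁·g` for some `g`, then there is a finitely additive
`Γ`-invariant mean on `X`. -/
theorem stmt_4 {Γ X : Type*} [Group Γ] [Countable Γ] [Countable X] [DecidableEq X]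
    (act : X → Γ → X)
    (act_one : ∀ x, act x 1 = x)
    (act_mul : ∀ x g h, act (act x g) h = act x (g * h))
    (folner : ∀ (G : Finset Γ) (ε : ℝ), 0 < ε →
      ∃ F : Finset X, F.Nonempty ∧ ∀ g ∈ G,
        ((F \ F.image (fun x => act x g)).card : ℝ) < ε * F.card)
    (hF12 : ∃ (F₁ F₂ : Finset X) (g : Γ),
      (F₂ : Set X) ⊆ (F₁ : Set X) ∪ ((F₁.image (fun x => act x g) : Finset X) : Set X)) :
    ∃ μ : Set X → ℝ,
      (∀ A, 0 ≤ μ A) ∧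
      μ Set.univ = 1 ∧
      (∀ A B : Set X, Disjoint A B → μ (A ∪ B) = μ A + μ B) ∧
      (∀ (A : Set X) (g : Γ), μ ((fun x => act x g) '' A) = μ A) :=
  stmt_4_general act act_one act_mul folner
end

section
/- Suppose A_n are bounded open subsets of a complete Riemannian manifold M with positive weight φ, satisfying |A_n^r \ A_n|_φ < (1/n)|A_n|_φ. Then the cut-off functions f_n(x) = max(0, 1 − d(x,A_n)/r) satisfy R_φ(f_n) ≤ 1/(n r²), and hence R_φ(f_n) → 0 as n → ∞. -/
open Metric MeasureTheory Set Filter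

/-- If bounded open sets `A_n` in a complete Riemannian manifold
(formalized in the Euclidean model with a measure `μ` and weight `φ`) satisfy
`|A_n^r \ A_n|_φ < (1/n)|A_n|_φ`, then the cut-off functions
`f_n(x) = max(0, 1 − d(x,A_n)/r)` have weighted Rayleigh quotients
`R_φ(f_n) ≤ 1/(n r²)`, and hence `R_φ(f_n) → 0`. -/
theorem stmt_10 {E : Type*} [NormedAddCommGroup E] [InnerProductSpace ℝ E]
    [FiniteDimensional ℝ E] [MeasurableSpace E] [BorelSpace E]
    (μ : Measure E) [IsLocallyFiniteMeasure μ]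
    (r : ℝ) (hr : 0 < r)
    (A : ℕ → Set E) (hAne : ∀ n, (A n).Nonempty)
    (hAopen : ∀ n, IsOpen (A n)) (hAbd : ∀ n, Bornology.IsBounded (A n))
    (φ : E → ℝ) (hφpos : ∀ p, 0 < φ p) (hφcont : Continuous φ)
    (hint : ∀ n, IntegrableOn (fun p => φ p ^ 2) (thickening r (A n)) μ)
    (hApos : ∀ n, 0 < ∫ p in A n, φ p ^ 2 ∂μ)
    (hsmall : ∀ n : ℕ, 1 ≤ n →
      (∫ p in thickening r (A n) \ A n, φ p ^ 2 ∂μ) <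
        (1 / n) * ∫ p in A n, φ p ^ 2 ∂μ)
    (f : ℕ → E → ℝ) (hf : ∀ n, f n = fun x => max 0 (1 - infDist x (A n) / r))
    (R : ℕ → ℝ)
    (hR : ∀ n, R n = (∫ p, ‖fderiv ℝ (f n) p‖ ^ 2 * φ p ^ 2 ∂μ) /
      (∫ p, f n p ^ 2 * φ p ^ 2 ∂μ)) :
    (∀ n : ℕ, 1 ≤ n → R n ≤ 1 / (n * r ^ 2)) ∧
      Tendsto R atTop (nhds 0) := by
  have key : ∀ n : ℕ, 0 ≤ R n ∧ (1 ≤ n → R n ≤ 1 / (n * r ^ 2)) := by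
    intro n
    set T := thickening r (A n) with hT
    have hAT : A n ⊆ T := self_subset_thickening hr _
    -- basic properties of f n
    have hf0 : ∀ x, 0 ≤ f n x := by intro x; rw [hf]; exact le_max_left _ _
    have hf1 : ∀ x, f n x ≤ 1 := by
      intro x; rw [hf]
      refine max_le zero_le_one (by
        have : 0 ≤ infDist x (A n) / r := div_nonneg infDist_nonneg hr.le
        linarith)
    have hfA : ∀ x ∈ A n, f n x = 1 := by
      intro x hx; rw [hf]; simp [infDist_zero_of_mem hx]
    have hfT : ∀ x, x ∉ T → f n x = 0 := by
      intro x hx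
      have hd : r ≤ infDist x (A n) := by
        by_contra h
        exact hx ((mem_thickening_iff_infDist_lt (hAne n)).2 (lt_of_not_ge h))
      rw [hf]
      refine max_eq_left ?_
      have : 1 ≤ infDist x (A n) / r := (one_le_div hr).2 hd
      linarith
    -- Lipschitz bound
    have hlip : LipschitzWith (1 / r).toNNReal (f n) := by
      rw [hf]
      apply LipschitzWith.of_dist_le_mul
      intro x y
      rw [Real.coe_toNNReal _ (by positivity)]
      have h1 : dist (infDist x (A n)) (infDist y (A n)) ≤ 1 * dist x y :=
        (lipschitz_infDist_pt (A n)).dist_le_mul x y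
      have h2 : dist (max 0 (1 - infDist x (A n) / r)) (max 0 (1 - infDist y (A n) / r))
          ≤ dist (1 - infDist x (A n) / r) (1 - infDist y (A n) / r) := by
        rw [Real.dist_eq, Real.dist_eq, max_comm 0 _, max_comm 0 _]
        exact abs_max_sub_max_le_abs _ _ _
      have h3 : dist (1 - infDist x (A n) / r) (1 - infDist y (A n) / r)
          = dist (infDist x (A n)) (infDist y (A n)) / r := by
        rw [Real.dist_eq, Real.dist_eq,
          show 1 - infDist x (A n) / r - (1 - infDist y (A n) / r)
            = -((infDist x (A n) - infDist y (A n)) / r) by ring,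
          abs_neg, abs_div, abs_of_pos hr]
      calc dist (max 0 (1 - infDist x (A n) / r)) (max 0 (1 - infDist y (A n) / r))
          ≤ dist (infDist x (A n)) (infDist y (A n)) / r := by rw [← h3]; exact h2
        _ ≤ (1 * dist x y) / r := by gcongr
        _ = 1 / r * dist x y := by ring
    have hfd_le : ∀ x, ‖fderiv ℝ (f n) x‖ ≤ 1 / r := by
      intro x
      have := norm_fderiv_le_of_lipschitz ℝ hlip (x₀ := x)
      rwa [Real.coe_toNNReal _ (by positivity)] at this
    have hfdA : ∀ x ∈ A n, fderiv ℝ (f n) x = 0 := by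
      intro x hx
      have hev : f n =ᶠ[nhds x] fun _ => (1 : ℝ) := by
        filter_upwards [(hAopen n).mem_nhds hx] with y hy
        exact hfA y hy
      rw [hev.fderiv_eq]; exact fderiv_const_apply 1
    have hfdT : ∀ x, x ∉ T → fderiv ℝ (f n) x = 0 := by
      intro x hx
      have hmin : IsLocalMin (f n) x :=
        Eventually.of_forall fun y => (hfT x hx) ▸ hf0 y
      exact hmin.fderiv_eq_zero
    -- numerator and denominator
    set g : E → ℝ := fun p => ‖fderiv ℝ (f n) p‖ ^ 2 * φ p ^ 2 with hg
    set h : E → ℝ := fun p => f n p ^ 2 * φ p ^ 2 with hh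
    have hg0 : ∀ p, 0 ≤ g p := fun p => by positivity
    have hh0 : ∀ p, 0 ≤ h p := fun p => by positivity
    have hgmeas : AEStronglyMeasurable g μ :=
      (((measurable_fderiv ℝ (f n)).norm.pow_const 2).mul
        ((hφcont.measurable).pow_const 2)).aestronglyMeasurable
    have hhcont : Continuous h := by
      rw [hh]; exact ((hlip.continuous.pow 2).mul (hφcont.pow 2))
    have hmeasTA : MeasurableSet (T \ A n) :=
      isOpen_thickening.measurableSet.diff (hAopen n).measurableSet
    have hgvan : ∀ x, x ∉ T \ A n → g x = 0 := by
      intro x hx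
      by_cases hxA : x ∈ A n
      · rw [hg]; simp [hfdA x hxA]
      · have hxT : x ∉ T := fun hT' => hx ⟨hT', hxA⟩
        rw [hg]; simp [hfdT x hxT]
    have hgbound : ∀ p, g p ≤ (1 / r) ^ 2 * φ p ^ 2 := by
      intro p
      have := hfd_le p
      have h2 : ‖fderiv ℝ (f n) p‖ ^ 2 ≤ (1 / r) ^ 2 := by
        apply pow_le_pow_left₀ (norm_nonneg _) this
      rw [hg]
      exact mul_le_mul_of_nonneg_right h2 (by positivity)
    have hφTA : IntegrableOn (fun p => (1 / r) ^ 2 * φ p ^ 2) (T \ A n) μ :=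
      (((hint n).mono_set diff_subset).const_mul _)
    have hgTA : IntegrableOn g (T \ A n) μ := by
      refine MeasureTheory.Integrable.mono hφTA hgmeas.restrict (Eventually.of_forall fun p => ?_)
      rw [Real.norm_eq_abs, Real.norm_eq_abs, abs_of_nonneg (hg0 p),
        abs_of_nonneg (by positivity)]
      exact hgbound p
    have hgint : Integrable g μ := by
      have : g = (T \ A n).indicator g := by
        funext x
        by_cases hx : x ∈ T \ A n
        · rw [Set.indicator_of_mem hx]
        · rw [Set.indicator_of_notMem hx, hgvan x hx]
      rw [this]
      exact hgTA.integrable_indicator hmeasTA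
    have hNg : (∫ p, g p ∂μ) = ∫ p in T \ A n, g p ∂μ :=
      (setIntegral_eq_integral_of_forall_compl_eq_zero hgvan).symm
    have hNle : (∫ p, g p ∂μ) ≤ (1 / r) ^ 2 * ∫ p in T \ A n, φ p ^ 2 ∂μ := by
      rw [hNg, ← integral_const_mul]
      exact setIntegral_mono_on hgTA hφTA hmeasTA fun p _ => hgbound p
    -- denominator
    have hhT : IntegrableOn h T μ := by
      refine MeasureTheory.Integrable.mono (hint n) hhcont.aestronglyMeasurable.restrict
        (Eventually.of_forall fun p => ?_)
      rw [Real.norm_eq_abs, Real.norm_eq_abs, abs_of_nonneg (hh0 p),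
        abs_of_nonneg (by positivity)]
      rw [hh]; simp only
      have h1 : f n p ^ 2 ≤ 1 := pow_le_one₀ (hf0 p) (hf1 p)
      nlinarith [h1, sq_nonneg (φ p)]
    have hhvan : ∀ x, x ∉ T → h x = 0 := by
      intro x hx; rw [hh]; simp [hfT x hx]
    have hD : (∫ p, h p ∂μ) = ∫ p in T, h p ∂μ :=
      (setIntegral_eq_integral_of_forall_compl_eq_zero hhvan).symm
    have hDA : (∫ p in A n, h p ∂μ) = ∫ p in A n, φ p ^ 2 ∂μ := by
      refine setIntegral_congr_fun (hAopen n).measurableSet fun x hx => ?_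
      rw [hh]; simp [hfA x hx]
    have hDge : (∫ p in A n, φ p ^ 2 ∂μ) ≤ ∫ p, h p ∂μ := by
      rw [hD, ← hDA]
      exact setIntegral_mono_set hhT (Eventually.of_forall fun p => hh0 p)
        (HasSubset.Subset.eventuallyLE hAT)
    have hDpos : 0 < ∫ p, h p ∂μ := lt_of_lt_of_le (hApos n) hDge
    have hNnonneg : 0 ≤ ∫ p, g p ∂μ := integral_nonneg hg0
    constructor
    · rw [hR]; exact div_nonneg hNnonneg hDpos.le
    · intro hn
      have hnpos : (0 : ℝ) < n := by exact_mod_cast hn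
      have hS := hsmall n hn
      have hNle2 : (∫ p, g p ∂μ) ≤ 1 / (n * r ^ 2) * ∫ p, h p ∂μ := by
        calc (∫ p, g p ∂μ) ≤ (1 / r) ^ 2 * ∫ p in T \ A n, φ p ^ 2 ∂μ := hNle
          _ ≤ (1 / r) ^ 2 * ((1 / n) * ∫ p in A n, φ p ^ 2 ∂μ) := by
              apply mul_le_mul_of_nonneg_left hS.le (by positivity)
          _ = 1 / (n * r ^ 2) * ∫ p in A n, φ p ^ 2 ∂μ := by
              rw [← mul_assoc]
              congr 1
              field_simp
          _ ≤ 1 / (n * r ^ 2) * ∫ p, h p ∂μ := by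
              apply mul_le_mul_of_nonneg_left hDge (by positivity)
      rw [hR]
      rw [div_le_iff₀ hDpos]
      exact hNle2
  refine ⟨fun n hn => (key n).2 hn, ?_⟩
  have hbnd : Tendsto (fun n : ℕ => 1 / (n * r ^ 2)) atTop (nhds 0) := by
    have h1 : Tendsto (fun n : ℕ => 1 / (n : ℝ) * (1 / r ^ 2)) atTop (nhds (0 * (1 / r ^ 2))) :=
      tendsto_one_div_atTop_nhds_zero_nat.mul_const _
    rw [zero_mul] at h1
    convert h1 using 2 with n
    rw [div_mul_div_comm, one_mul]
  refine squeeze_zero' (Eventually.of_forall fun n => (key n).1)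
    (eventually_atTop.2 ⟨1, fun n hn => (key n).2 hn⟩) hbnd
end
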